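/- For all integers 1 ≤ k ≤ k' and p ≥ 0, there exists a finite set S ⊆ ℤ^{k'} such that the subgraph of the k'-dimensional mesh induced on S is connected, every vertex of S has at most 2k neighbors in S, any two vertices of S are at graph distance at most 2p in the induced subgraph, and |S| = f(k,p), the number of lattice points in the closed L¹-ball of radius p in ℤ^k. (In particular, the induced subgraph on the ball B_k(p) itself, embedded in the first k coordinates, has these properties.) -/

import Mathlib

/-- `latticeBall k p` is the number of lattice points `x ∈ ℤ^k` with `∑ i, |x i| ≤ p`,
i.e. the cardinality of the closed L¹-ball `B_k(p)` centered at a lattice point. -/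
noncomputable def latticeBall (k p : ℕ) : ℕ :=
  Set.ncard {x : Fin k → ℤ | ∑ i, |x i| ≤ (p : ℤ)}

/-- The `k`-dimensional mesh: the simple graph on `ℤ^k` where two points are adjacent
iff they are at L¹-distance exactly `1`. -/
def mesh (k : ℕ) : SimpleGraph (Fin k → ℤ) where
  Adj x y := ∑ i, |x i - y i| = 1
  symm := by
    refine ⟨?_⟩
    intro x y h
    have e : ∀ i ∈ Finset.univ, |y i - x i| = |x i - y i| := fun i _ => abs_sub_comm _ _
    rw [Finset.sum_congr rfl e]
    exact h
  loopless := by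
    refine ⟨?_⟩
    intro x h
    simp at h

/-!
Take `S` to be the image of `B_k(p)` under extension by zero `ℤ^k → ℤ^{k'}`, which is an
isometric embedding of meshes, so every property can be checked for `B_k(p)` inside the
`k`-dimensional mesh. There a vertex `x` has only the `2k` neighbours `x ± eᵢ`, and moving a
nonzero coordinate of `x` one step towards `0` gives a neighbour of smaller norm, so `x` is
joined to `0` inside the ball by a walk of length `‖x‖₁ ≤ p`.
-/

open Function Set

namespace SimpleGraph

variable {V W : Type*} {G : SimpleGraph V} {H : SimpleGraph W}

theorem Reachable.dist_map_le (φ : G →g H) {u v : V} (h : G.Reachable u v) :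
    H.dist (φ u) (φ v) ≤ G.dist u v := by
  obtain ⟨w, hw⟩ := h.exists_walk_length_eq_dist
  simpa [hw] using H.dist_le (w.map φ)

theorem Connected.induce_image (φ : G →g H) {s : Set V} (h : (G.induce s).Connected) :
    (H.induce (φ '' s)).Connected :=
  h.map (induceHom φ (mapsTo_image φ s)) <| by
    rintro ⟨_, x, hx, rfl⟩
    exact ⟨⟨x, hx⟩, rfl⟩

theorem Embedding.setOf_mem_image_and_adj (f : G ↪g H) (s : Set V) (x : V) :
    {y | y ∈ f '' s ∧ H.Adj (f x) y} = f '' {y | y ∈ s ∧ G.Adj x y} := by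
  ext y
  constructor
  · rintro ⟨⟨z, hz, rfl⟩, hadj⟩
    exact ⟨z, ⟨hz, f.map_adj_iff.1 hadj⟩, rfl⟩
  · rintro ⟨z, ⟨hz, hadj⟩, rfl⟩
    exact ⟨mem_image_of_mem f hz, f.map_adj_iff.2 hadj⟩

end SimpleGraph

theorem Function.Injective.sum_comp_extend_zero {ι ι' M N : Type*} [Fintype ι] [Fintype ι']
    [Zero M] [AddCommMonoid N] {e : ι → ι'} (he : Injective e) (g : ι → M) {F : M → N}
    (hF : F 0 = 0) : ∑ j, F (extend e g 0 j) = ∑ i, F (g i) := by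
  classical
  calc ∑ j, F (extend e g 0 j)
      = ∑ j ∈ Finset.univ.image e, F (extend e g 0 j) := by
        refine (Finset.sum_subset (Finset.subset_univ _) fun j _ hj => ?_).symm
        rw [extend_apply' _ _ _ fun ⟨i, hi⟩ => hj (by simp [← hi]), Pi.zero_apply, hF]
    _ = ∑ i, F (g i) := by
        rw [Finset.sum_image he.injOn]
        simp only [he.extend_apply]

namespace mesh

variable {k : ℕ}

theorem adj_iff {x y : Fin k → ℤ} :
    (mesh k).Adj x y ↔ ∃ i, |x i - y i| = 1 ∧ ∀ j ≠ i, x j = y j := by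
  have hnonneg : ∀ j ∈ Finset.univ, 0 ≤ |x j - y j| := fun j _ => abs_nonneg _
  constructor
  · intro h
    change ∑ j, |x j - y j| = 1 at h
    obtain ⟨i, -, hi⟩ := Finset.exists_ne_zero_of_sum_ne_zero (h.symm ▸ one_ne_zero)
    have hi_le := h ▸ Finset.single_le_sum hnonneg (Finset.mem_univ i)
    have hi_ge := Int.one_le_abs (abs_ne_zero.1 hi)
    refine ⟨i, le_antisymm hi_le hi_ge, fun j hj => ?_⟩
    have hij := h ▸ Finset.add_le_sum hnonneg (Finset.mem_univ i) (Finset.mem_univ j) hj.symm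
    exact sub_eq_zero.1 (abs_nonpos_iff.1 (by omega))
  · rintro ⟨i, hi, hrest⟩
    change ∑ j, |x j - y j| = 1
    rw [Fintype.sum_eq_single i fun j hj => by rw [hrest j hj, sub_self, abs_zero], hi]

theorem neighborSet_subset_range (x : Fin k → ℤ) :
    (mesh k).neighborSet x ⊆ range fun q : Fin k × ℤˣ => update x q.1 (x q.1 + q.2) := by
  intro y hy
  obtain ⟨i, hi, hrest⟩ := adj_iff.1 hy
  have hunit : IsUnit (y i - x i) := Int.isUnit_iff_abs_eq.2 (by rw [abs_sub_comm, hi])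
  refine ⟨(i, hunit.unit), funext fun j => ?_⟩
  rcases eq_or_ne j i with rfl | hj
  · simp
  · simp only [update_of_ne hj, hrest j hj]

theorem neighborSet_finite (x : Fin k → ℤ) : ((mesh k).neighborSet x).Finite :=
  (finite_range _).subset (neighborSet_subset_range x)

theorem ncard_neighborSet_le (x : Fin k → ℤ) : ((mesh k).neighborSet x).ncard ≤ 2 * k :=
  calc ((mesh k).neighborSet x).ncard
      ≤ (range fun q : Fin k × ℤˣ => update x q.1 (x q.1 + q.2)).ncard :=
        ncard_le_ncard (neighborSet_subset_range x) (finite_range _)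
    _ ≤ Nat.card (Fin k × ℤˣ) := Finite.card_range_le _
    _ = 2 * k := by simp [Nat.card_eq_fintype_card, Fintype.card_units_int, mul_comm]

theorem exists_adj_sum_abs_add_one {x : Fin k → ℤ} (hx : x ≠ 0) :
    ∃ y, (mesh k).Adj x y ∧ ∑ i, |y i| + 1 = ∑ i, |x i| := by
  obtain ⟨i, hi⟩ : ∃ i, x i ≠ 0 := Function.ne_iff.1 hx
  have hstep : |x i - Int.sign (x i)| + 1 = |x i| := by
    rcases lt_or_gt_of_ne hi with h | h
    · rw [Int.sign_eq_neg_one_of_neg h, abs_of_neg h, abs_of_nonpos (by omega)]; ring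
    · rw [Int.sign_eq_one_of_pos h, abs_of_pos h, abs_of_nonneg (by omega)]; ring
  refine ⟨update x i (x i - Int.sign (x i)), adj_iff.2 ⟨i, ?_, fun j hj => ?_⟩, ?_⟩
  · simp [Int.abs_sign_of_ne_zero hi]
  · rw [update_of_ne hj]
  · have hdiff : ∑ j, (|x j| - |update x i (x i - Int.sign (x i)) j|) = 1 := by
      rw [Fintype.sum_eq_single i fun j hj => by rw [update_of_ne hj, sub_self]]
      simp only [update_self]
      omega
    rw [Finset.sum_sub_distrib] at hdiff
    omega

noncomputable def embedding {k' : ℕ} (e : Fin k ↪ Fin k') : mesh k ↪g mesh k' where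
  toFun x := extend e x 0
  inj' := extend_injective e.injective 0
  map_rel_iff' {x y} := by
    change ∑ j, |(extend e x 0 - extend e y 0) j| = 1 ↔ ∑ i, |(x - y) i| = 1
    rw [← extend_sub, sub_zero, e.injective.sum_comp_extend_zero _ abs_zero]

end mesh

/-- `latticeBall k p` unfolds to `(l1Ball k p).ncard`. -/
def l1Ball (k p : ℕ) : Set (Fin k → ℤ) := {x | ∑ i, |x i| ≤ (p : ℤ)}

namespace l1Ball

variable {k p : ℕ}

theorem zero_mem : (0 : Fin k → ℤ) ∈ l1Ball k p := by simp [l1Ball]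

theorem finite : (l1Ball k p).Finite := by
  refine (finite_Icc (-(p : Fin k → ℤ)) p).subset fun x hx => ?_
  have hcoord : ∀ i, |x i| ≤ p :=
    fun i => (Finset.single_le_sum (fun j _ => abs_nonneg (x j)) (Finset.mem_univ i)).trans hx
  exact ⟨fun i => neg_le_of_abs_le (hcoord i), fun i => le_of_abs_le (hcoord i)⟩

theorem exists_walk_to_zero_length_eq (n : ℕ) {x : Fin k → ℤ} (hx : x ∈ l1Ball k p)
    (hn : ∑ i, |x i| = n) :
    ∃ w : ((mesh k).induce (l1Ball k p)).Walk ⟨x, hx⟩ ⟨0, zero_mem⟩, w.length = n := by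
  induction n generalizing x with
  | zero =>
    have hx0 : x = 0 := funext fun i => abs_eq_zero.1 <|
      (Finset.sum_eq_zero_iff_of_nonneg fun j _ => abs_nonneg (x j)).1 hn i (Finset.mem_univ i)
    subst hx0
    exact ⟨.nil, rfl⟩
  | succ n ih =>
    have hx0 : x ≠ 0 := by
      rintro rfl
      simp only [Pi.zero_apply, abs_zero, Finset.sum_const_zero] at hn
      omega
    obtain ⟨y, hadj, hy⟩ := mesh.exists_adj_sum_abs_add_one hx0
    have hyn : ∑ i, |y i| = n := by push_cast at hn; omega
    have hyB : y ∈ l1Ball k p := by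
      have : ∑ i, |x i| ≤ p := hx
      change ∑ i, |y i| ≤ p
      omega
    obtain ⟨w, hw⟩ := ih hyB hyn
    have hadj' : ((mesh k).induce (l1Ball k p)).Adj ⟨x, hx⟩ ⟨y, hyB⟩ := hadj
    exact ⟨.cons hadj' w, by rw [SimpleGraph.Walk.length_cons, hw]⟩

theorem exists_walk_to_zero_length_le {x : Fin k → ℤ} (hx : x ∈ l1Ball k p) :
    ∃ w : ((mesh k).induce (l1Ball k p)).Walk ⟨x, hx⟩ ⟨0, zero_mem⟩, w.length ≤ p := by
  obtain ⟨n, hn⟩ := Int.eq_ofNat_of_zero_le (Finset.sum_nonneg fun i _ => abs_nonneg (x i))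
  obtain ⟨w, hw⟩ := exists_walk_to_zero_length_eq n hx hn
  have : ∑ i, |x i| ≤ p := hx
  exact ⟨w, by omega⟩

theorem connected_induce : ((mesh k).induce (l1Ball k p)).Connected := by
  have : Nonempty (l1Ball k p) := ⟨⟨0, zero_mem⟩⟩
  refine ⟨fun ⟨x, hx⟩ ⟨y, hy⟩ => ?_⟩
  obtain ⟨wx, -⟩ := exists_walk_to_zero_length_le hx
  obtain ⟨wy, -⟩ := exists_walk_to_zero_length_le hy
  exact wx.reachable.trans wy.reachable.symm

theorem dist_induce_le (x y : l1Ball k p) : ((mesh k).induce (l1Ball k p)).dist x y ≤ 2 * p := by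
  obtain ⟨wx, hwx⟩ := exists_walk_to_zero_length_le x.2
  obtain ⟨wy, hwy⟩ := exists_walk_to_zero_length_le y.2
  calc ((mesh k).induce (l1Ball k p)).dist x y ≤ (wx.append wy.reverse).length :=
        SimpleGraph.dist_le _
    _ ≤ 2 * p := by simp only [SimpleGraph.Walk.length_append, SimpleGraph.Walk.length_reverse]; omega

end l1Ball

theorem exists_subgraph_of_ball_general (k k' p : ℕ) (hkk' : k ≤ k') :
    ∃ S : Set (Fin k' → ℤ), S.Finite ∧
      ((mesh k').induce S).Connected ∧
      (∀ x ∈ S, {y | y ∈ S ∧ (mesh k').Adj x y}.ncard ≤ 2 * k) ∧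
      (∀ x, ∀ hx : x ∈ S, ∀ y, ∀ hy : y ∈ S,
        ((mesh k').induce S).dist ⟨x, hx⟩ ⟨y, hy⟩ ≤ 2 * p) ∧
      S.ncard = latticeBall k p := by
  let f := mesh.embedding (Fin.castLEEmb hkk')
  have hconn : ((mesh k).induce (l1Ball k p)).Connected := l1Ball.connected_induce
  refine ⟨f '' l1Ball k p, l1Ball.finite.image f, hconn.induce_image f.toHom, ?_, ?_,
    ncard_image_of_injective _ f.injective⟩
  · rintro _ ⟨x, -, rfl⟩
    rw [f.setOf_mem_image_and_adj, ncard_image_of_injective _ f.injective]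
    exact (ncard_le_ncard (fun y hy => hy.2) (mesh.neighborSet_finite x)).trans
      (mesh.ncard_neighborSet_le x)
  · rintro _ ⟨x, hx, rfl⟩ _ ⟨y, hy, rfl⟩
    exact ((hconn.preconnected ⟨x, hx⟩ ⟨y, hy⟩).dist_map_le
      (SimpleGraph.induceHom f.toHom (mapsTo_image f _))).trans (l1Ball.dist_induce_le _ _)

/-- For all `1 ≤ k ≤ k'` and `p ≥ 0`, there is a finite set `S ⊆ ℤ^{k'}`
inducing a connected subgraph of the `k'`-dimensional mesh, in which every vertex has at
most `2k` neighbors, any two vertices are at graph distance at most `2p`, and `|S| = f(k,p)`. -/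
theorem exists_subgraph_of_ball (k k' p : ℕ) (hk : 1 ≤ k) (hkk' : k ≤ k') :
    ∃ S : Set (Fin k' → ℤ), S.Finite ∧
      ((mesh k').induce S).Connected ∧
      (∀ x ∈ S, {y | y ∈ S ∧ (mesh k').Adj x y}.ncard ≤ 2 * k) ∧
      (∀ x, ∀ hx : x ∈ S, ∀ y, ∀ hy : y ∈ S,
        ((mesh k').induce S).dist ⟨x, hx⟩ ⟨y, hy⟩ ≤ 2 * p) ∧
      S.ncard = latticeBall k p :=
  exists_subgraph_of_ball_general k k' p hkk'
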